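/- arXiv:1510.01283 — 3 statements merged into one kernel-verified Lean document; each statement's English description precedes it below -/
import Mathlib

section
/- Let S be a commutative ring in which 2 = 0, let B = S[w_1, w_2, ...] with the derivation ∂(w_1) = 0, ∂(w_n) = w_{n-1}^2. Then every element of ker(∂) is congruent modulo im(∂) to an element of the form s + t·w_1 with s, t ∈ S, and if s + t·w_1 ∈ im(∂) then s = t = 0. -/
/-!
Write `α k = 2 q_k + r_k` with `r_k ∈ {0, 1}`, so that
`X^α = X 0 ^ r_0 * ∏_{i ≥ 0} (X i ^ 2) ^ q_i * X (i + 1) ^ r_(i+1)`.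
Since `2 = 0`, `∂` kills every `y_i = X i ^ 2` and sends `x_i = X (i + 1)` to `y_i`, so as a
complex `B ≅ (S ⊕ S·X 0) ⊗ ⨂_i (S[y_i] ⊗ Λ(x_i))`. Each factor `S[y] ⊗ Λ(x)` is contracted
onto `S` by `y^(q+1) ↦ y^q x`, `y^q x ↦ 0`, and the tensor product of these contractions
applies it at the first factor that is not `1`. This gives a homotopy `h` with
`∂h + h∂ = id - π`, where `π` projects onto `S ⊕ S·X 0`: hence every cycle `p` is `π p`
modulo `im ∂`. Conversely every monomial of a boundary contains a square, so `π` vanishes on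
`im ∂`.
-/

open MvPolynomial

/-- The derivation on `B = S[w_1, w_2, ...]` (with `w_n = X (n-1)`) determined by
`∂(w_1) = 0` and `∂(w_n) = w_{n-1}^2` for `n ≥ 2`. -/
noncomputable def bockDeriv (S : Type*) [CommRing S] :
    Derivation S (MvPolynomial ℕ S) (MvPolynomial ℕ S) :=
  MvPolynomial.mkDerivation S (fun n => if n = 0 then 0 else (X (n - 1)) ^ 2)

namespace BockDeriv

open Finset

variable {S : Type*} [CommRing S] {α γ : ℕ →₀ ℕ} {i k : ℕ}

/-- The factor `S[X i ^ 2] ⊗ Λ(X (i + 1))` of `X^α` is not `1`. -/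
def Excited (α : ℕ →₀ ℕ) (i : ℕ) : Prop := 2 ≤ α i ∨ Odd (α (i + 1))

def IsFirstExcited (α : ℕ →₀ ℕ) (i : ℕ) : Prop := Excited α i ∧ ∀ k < i, ¬Excited α k

/-- `X ^ lowerExp k α` is the term of `∂ (X ^ α)` coming from `X (k + 1)`. -/
noncomputable def lowerExp (k : ℕ) (α : ℕ →₀ ℕ) : ℕ →₀ ℕ :=
  α - Finsupp.single (k + 1) 1 + Finsupp.single k 2

noncomputable def raiseExp (k : ℕ) (α : ℕ →₀ ℕ) : ℕ →₀ ℕ :=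
  α - Finsupp.single k 2 + Finsupp.single (k + 1) 1

theorem lowerExp_apply (k : ℕ) (α : ℕ →₀ ℕ) (j : ℕ) :
    lowerExp k α j = α j - (if k + 1 = j then 1 else 0) + (if k = j then 2 else 0) := by
  simp [lowerExp, Finsupp.single_apply]

theorem raiseExp_apply (k : ℕ) (α : ℕ →₀ ℕ) (j : ℕ) :
    raiseExp k α j = α j - (if k = j then 2 else 0) + (if k + 1 = j then 1 else 0) := by
  simp [raiseExp, Finsupp.single_apply]

theorem raiseExp_lowerExp (h : 1 ≤ α (k + 1)) : raiseExp k (lowerExp k α) = α := by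
  ext j
  simp only [raiseExp_apply, lowerExp_apply]
  split_ifs <;> subst_vars <;> omega

theorem lowerExp_raiseExp (h : 2 ≤ α k) : lowerExp k (raiseExp k α) = α := by
  ext j
  simp only [raiseExp_apply, lowerExp_apply]
  split_ifs <;> subst_vars <;> omega

theorem raiseExp_lowerExp_comm (hik : i < k) (hi : 2 ≤ α i) (hk : 1 ≤ α (k + 1)) :
    raiseExp i (lowerExp k α) = lowerExp k (raiseExp i α) := by
  ext j
  simp only [raiseExp_apply, lowerExp_apply]
  split_ifs <;> subst_vars <;> omega

theorem not_excited_iff : ¬Excited α i ↔ α i ≤ 1 ∧ Even (α (i + 1)) := by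
  rw [Excited, not_or, not_le, Nat.not_odd_iff_even, Nat.lt_succ_iff]

theorem forall_not_excited_iff :
    (∀ i, ¬Excited α i) ↔ α = 0 ∨ α = Finsupp.single 0 1 := by
  simp only [not_excited_iff, Nat.even_iff]
  constructor
  · intro h
    have hα : α = Finsupp.single 0 (α 0) := by
      ext j
      rcases j with _ | j
      · simp
      · have := h j
        have := h (j + 1)
        simp only [Finsupp.single_apply, Nat.right_eq_add, one_ne_zero, add_eq_zero, and_false,
          if_false]
        omega
    rcases Nat.le_one_iff_eq_zero_or_eq_one.1 (h 0).1 with h0 | h0 <;> rw [hα, h0] <;> simp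
  · rintro (rfl | rfl) i <;> simp [Finsupp.single_apply, apply_ite (· ≤ 1)]

theorem exists_isFirstExcited (h : ∃ i, Excited α i) : ∃ i, IsFirstExcited α i := by
  classical
  exact ⟨Nat.find h, Nat.find_spec h, fun _ => Nat.find_min h⟩

theorem IsFirstExcited.even_succ (h : IsFirstExcited α i) (hk : k < i) : Even (α (k + 1)) :=
  (not_excited_iff.1 (h.2 k hk)).2

theorem IsFirstExcited.of_eq_of_even_iff (h : IsFirstExcited α i) (hγ : Excited γ i)
    (hlt : ∀ j < i, γ j = α j) (hi : Even (γ i) ↔ Even (α i)) : IsFirstExcited γ i := by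
  refine ⟨hγ, fun k hk => not_excited_iff.2 ?_⟩
  obtain ⟨hαk, hαk1⟩ := not_excited_iff.1 (h.2 k hk)
  refine ⟨hlt k hk ▸ hαk, ?_⟩
  rcases Nat.lt_or_ge (k + 1) i with hk1 | hk1
  · rwa [hlt _ hk1]
  · rwa [show k + 1 = i by omega, hi, ← show k + 1 = i by omega]

theorem isFirstExcited_lowerExp_self (h : ∀ k < i, ¬Excited α k) :
    IsFirstExcited (lowerExp i α) i := by
  refine ⟨Or.inl ?_, fun k hk => not_excited_iff.2 ?_⟩
  · rw [lowerExp_apply]; split_ifs <;> omega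
  · obtain ⟨hαk, hαk1⟩ := not_excited_iff.1 (h k hk)
    rw [Nat.even_iff] at hαk1 ⊢
    simp only [lowerExp_apply]
    split_ifs <;> subst_vars <;> omega

theorem even_lowerExp_succ_iff (hik : i < k) :
    Even (lowerExp k α (i + 1)) ↔ Even (α (i + 1)) := by
  simp only [lowerExp_apply, Nat.even_iff]
  split_ifs <;> subst_vars <;> omega

theorem IsFirstExcited.lowerExp_of_lt (h : IsFirstExcited α i) (hik : i < k) :
    IsFirstExcited (lowerExp k α) i := by
  have hi : lowerExp k α i = α i := by rw [lowerExp_apply]; split_ifs <;> omega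
  have hlt (j : ℕ) (hj : j < i) : lowerExp k α j = α j := by
    rw [lowerExp_apply]; split_ifs <;> omega
  refine h.of_eq_of_even_iff ?_ hlt (by rw [hi])
  rcases h.1 with h2 | hodd
  · exact Or.inl (hi ▸ h2)
  · rw [Excited, ← Nat.not_even_iff_odd, even_lowerExp_succ_iff hik, Nat.not_even_iff_odd]
    exact Or.inr hodd

theorem exists_gt_forall_gt_eq_zero (α : ℕ →₀ ℕ) (i : ℕ) :
    ∃ N, i < N ∧ ∀ j, N < j → α j = 0 := by
  obtain ⟨M, hM⟩ := α.support.exists_nat_subset_range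
  refine ⟨M + i + 1, by omega, fun j hj => Finsupp.notMem_support_iff.1 fun hmem => ?_⟩
  have := Finset.mem_range.1 (hM hmem)
  omega

variable (S) in
open Classical in
noncomputable def homotopyBasis (α : ℕ →₀ ℕ) : MvPolynomial ℕ S :=
  if h : ∃ i, Excited α i then
    if Even (α (Nat.find h + 1)) then monomial (raiseExp (Nat.find h) α) 1 else 0
  else 0

variable (S) in
noncomputable def homotopy : MvPolynomial ℕ S →ₗ[S] MvPolynomial ℕ S :=
  (basisMonomials ℕ S).constr S (homotopyBasis S)

theorem homotopy_monomial (α : ℕ →₀ ℕ) : homotopy S (monomial α 1) = homotopyBasis S α :=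
  (basisMonomials ℕ S).constr_basis S _ α

theorem homotopyBasis_of_isFirstExcited (h : IsFirstExcited α i) :
    homotopyBasis S α = if Even (α (i + 1)) then monomial (raiseExp i α) 1 else 0 := by
  classical
  have hex : ∃ k, Excited α k := ⟨i, h.1⟩
  rw [homotopyBasis, dif_pos hex, (Nat.find_eq_iff hex).2 h]

theorem homotopyBasis_of_forall_not_excited (h : ∀ i, ¬Excited α i) : homotopyBasis S α = 0 :=
  dif_neg (not_exists.2 h)

variable (S) in
noncomputable def groundProj : MvPolynomial ℕ S →ₗ[S] MvPolynomial ℕ S :=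
  monomial 0 ∘ₗ lcoeff S 0 + monomial (Finsupp.single 0 1) ∘ₗ lcoeff S (Finsupp.single 0 1)

theorem groundProj_apply (p : MvPolynomial ℕ S) :
    groundProj S p = C (coeff 0 p) + C (coeff (Finsupp.single 0 1) p) * X 0 := by
  simp [groundProj, C_mul_X_eq_monomial]

theorem groundProj_monomial_of_forall_not_excited (h : ∀ i, ¬Excited α i) :
    groundProj S (monomial α 1) = monomial α 1 := by
  rcases forall_not_excited_iff.1 h with rfl | rfl <;>
    simp [groundProj, coeff_one, (Finsupp.single_ne_zero.2 one_ne_zero).symm]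

theorem groundProj_monomial_of_excited (h : Excited α i) : groundProj S (monomial α 1) = 0 := by
  have hα : ¬(α = 0 ∨ α = Finsupp.single 0 1) := fun hα => forall_not_excited_iff.2 hα i h
  simp only [not_or] at hα
  simp [groundProj, coeff_monomial, hα.1, hα.2]

section CharTwo

variable (h2 : (2 : S) = 0)
include h2

theorem bockDeriv_monomial {N : ℕ} (hN : ∀ j, N < j → α j = 0) (c : S) :
    bockDeriv S (monomial α c) =
      ∑ k ∈ range N, if Odd (α (k + 1)) then monomial (lowerExp k α) c else 0 := by
  have hsupp : α.support ⊆ range (N + 1) := fun j hj => by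
    have := mt (hN j) (Finsupp.mem_support_iff.1 hj)
    rw [mem_range]; omega
  rw [bockDeriv, mkDerivation_monomial, Finsupp.sum, smul_sum,
    sum_subset hsupp fun j _ hj => by rw [Finsupp.notMem_support_iff.1 hj]; simp,
    sum_range_succ', if_pos rfl, smul_zero, smul_zero, add_zero]
  refine sum_congr rfl fun k _ => ?_
  rw [if_neg k.succ_ne_zero, Nat.add_sub_cancel, smul_eq_mul, X_pow_eq_monomial, monomial_mul]
  rcases Nat.even_or_odd (α (k + 1)) with he | ho
  · rw [natCast_eq_zero_of_even_of_two_eq_zero he h2, if_neg (Nat.not_odd_iff_even.2 he)]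
    simp
  · rw [natCast_eq_one_of_odd_of_two_eq_zero ho h2, if_pos ho]
    simp [lowerExp, smul_monomial]

theorem homotopy_bockDeriv_monomial {N : ℕ} (hN : ∀ j, N < j → α j = 0) :
    homotopy S (bockDeriv S (monomial α 1)) =
      ∑ k ∈ range N, if Odd (α (k + 1)) then homotopyBasis S (lowerExp k α) else 0 := by
  simp only [bockDeriv_monomial h2 hN, map_sum, apply_ite (homotopy S), homotopy_monomial,
    map_zero]

theorem bockDeriv_homotopy_add_of_forall_not_excited (h : ∀ i, ¬Excited α i) :
    bockDeriv S (homotopy S (monomial α 1)) + homotopy S (bockDeriv S (monomial α 1)) = 0 := by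
  obtain ⟨N, -, hN⟩ := exists_gt_forall_gt_eq_zero α 0
  rw [homotopy_monomial, homotopyBasis_of_forall_not_excited h, map_zero, zero_add,
    bockDeriv_monomial h2 hN, sum_eq_zero fun k _ => if_neg ?_, map_zero]
  exact Nat.not_odd_iff_even.2 (not_excited_iff.1 (h k)).2

theorem bockDeriv_homotopy_add_of_odd (h : IsFirstExcited α i) (hodd : Odd (α (i + 1))) :
    bockDeriv S (homotopy S (monomial α 1)) + homotopy S (bockDeriv S (monomial α 1)) =
      monomial α 1 := by
  obtain ⟨N, hiN, hN⟩ := exists_gt_forall_gt_eq_zero α i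
  have heven : Even (lowerExp i α (i + 1)) := by
    rw [lowerExp_apply, Nat.even_iff]
    rw [Nat.odd_iff] at hodd
    split_ifs <;> omega
  rw [homotopy_monomial, homotopyBasis_of_isFirstExcited h,
    if_neg (Nat.not_even_iff_odd.2 hodd), map_zero, zero_add, homotopy_bockDeriv_monomial h2 hN,
    sum_eq_single_of_mem i (mem_range.2 hiN), if_pos hodd,
    homotopyBasis_of_isFirstExcited (isFirstExcited_lowerExp_self h.2), if_pos heven,
    raiseExp_lowerExp hodd.pos]
  intro k _ hki
  split_ifs with hk
  · have hik : i < k := lt_of_le_of_ne (not_lt.1 fun hlt =>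
      Nat.not_even_iff_odd.2 hk (h.even_succ hlt)) (Ne.symm hki)
    rw [homotopyBasis_of_isFirstExcited (h.lowerExp_of_lt hik), if_neg]
    rwa [even_lowerExp_succ_iff hik, Nat.not_even_iff_odd]
  · rfl

theorem bockDeriv_homotopy_add_of_even (h : IsFirstExcited α i) (heven : Even (α (i + 1))) :
    bockDeriv S (homotopy S (monomial α 1)) + homotopy S (bockDeriv S (monomial α 1)) =
      monomial α 1 := by
  have hi : 2 ≤ α i := h.1.resolve_right (Nat.not_odd_iff_even.2 heven)
  obtain ⟨N, hiN, hN⟩ := exists_gt_forall_gt_eq_zero α i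
  have hβN : ∀ j, N < j → raiseExp i α j = 0 := fun j hj => by
    rw [raiseExp_apply, hN j hj]; split_ifs <;> omega
  have hodd : Odd (raiseExp i α (i + 1)) := by
    rw [raiseExp_apply, Nat.odd_iff]
    rw [Nat.even_iff] at heven
    split_ifs <;> omega
  rw [homotopy_monomial, homotopyBasis_of_isFirstExcited h, if_pos heven,
    bockDeriv_monomial h2 hβN, homotopy_bockDeriv_monomial h2 hN, ← sum_add_distrib,
    sum_eq_single_of_mem i (mem_range.2 hiN), if_pos hodd, lowerExp_raiseExp hi,
    if_neg (Nat.not_odd_iff_even.2 heven), add_zero]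
  intro k _ hki
  rcases lt_or_gt_of_ne hki with hik | hik
  · have hα := h.even_succ hik
    have hβ : Even (raiseExp i α (k + 1)) := by
      rw [raiseExp_apply]
      rw [Nat.even_iff] at hα ⊢
      split_ifs <;> omega
    rw [if_neg (Nat.not_odd_iff_even.2 hβ), if_neg (Nat.not_odd_iff_even.2 hα), add_zero]
  · have hβ : raiseExp i α (k + 1) = α (k + 1) := by
      rw [raiseExp_apply]; split_ifs <;> omega
    rw [hβ]
    split_ifs with hk
    · rw [homotopyBasis_of_isFirstExcited (h.lowerExp_of_lt hik),
        if_pos ((even_lowerExp_succ_iff hik).2 heven), raiseExp_lowerExp_comm hik hi hk.pos,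
        ← two_smul S, h2, zero_smul]
    · exact add_zero 0

theorem bockDeriv_homotopy_add_homotopy_bockDeriv (p : MvPolynomial ℕ S) :
    bockDeriv S (homotopy S p) + homotopy S (bockDeriv S p) = p - groundProj S p := by
  let D : MvPolynomial ℕ S →ₗ[S] MvPolynomial ℕ S := bockDeriv S
  suffices D ∘ₗ homotopy S + homotopy S ∘ₗ D = LinearMap.id - groundProj S from
    LinearMap.congr_fun this p
  refine (basisMonomials ℕ S).ext fun α => ?_
  simp only [D, coe_basisMonomials, LinearMap.add_apply, LinearMap.comp_apply,
    Derivation.coeFn_coe, LinearMap.sub_apply, LinearMap.id_apply]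
  by_cases hex : ∃ i, Excited α i
  · obtain ⟨i, hi⟩ := exists_isFirstExcited hex
    rw [groundProj_monomial_of_excited hi.1, sub_zero]
    rcases Nat.even_or_odd (α (i + 1)) with heven | hodd
    · exact bockDeriv_homotopy_add_of_even h2 hi heven
    · exact bockDeriv_homotopy_add_of_odd h2 hi hodd
  · push Not at hex
    rw [groundProj_monomial_of_forall_not_excited hex, sub_self]
    exact bockDeriv_homotopy_add_of_forall_not_excited h2 hex

theorem coeff_bockDeriv_eq_zero {m : ℕ →₀ ℕ} (hm : ∀ j, m j ≤ 1) (q : MvPolynomial ℕ S) :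
    coeff m (bockDeriv S q) = 0 := by
  let D : MvPolynomial ℕ S →ₗ[S] MvPolynomial ℕ S := bockDeriv S
  suffices lcoeff S m ∘ₗ D = 0 from LinearMap.congr_fun this q
  refine (basisMonomials ℕ S).ext fun α => ?_
  obtain ⟨N, -, hN⟩ := exists_gt_forall_gt_eq_zero α 0
  simp only [D, coe_basisMonomials, LinearMap.comp_apply, Derivation.coeFn_coe, lcoeff_apply,
    LinearMap.zero_apply, bockDeriv_monomial h2 hN, coeff_sum]
  refine sum_eq_zero fun k _ => ?_
  split_ifs
  · rw [coeff_monomial, if_neg fun hmk => ?_]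
    have := hm k
    rw [← hmk, lowerExp_apply] at this
    split_ifs at this <;> omega
  · exact coeff_zero m

end CharTwo

end BockDeriv

/-- Every element of `ker ∂` is congruent modulo `im ∂` to `s + t·w_1`, and such an element
lies in `im ∂` only when `s = t = 0`. -/
theorem stmt2 (S : Type*) [CommRing S] (h2 : (2 : S) = 0) :
    (∀ p : MvPolynomial ℕ S, bockDeriv S p = 0 →
      ∃ s t : S, ∃ q : MvPolynomial ℕ S, p - (C s + C t * X 0) = bockDeriv S q)
    ∧ (∀ s t : S, (∃ q : MvPolynomial ℕ S, bockDeriv S q = C s + C t * X 0) →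
        s = 0 ∧ t = 0) := by
  constructor
  · intro p hp
    refine ⟨coeff 0 p, coeff (Finsupp.single 0 1) p, BockDeriv.homotopy S p, ?_⟩
    rw [← BockDeriv.groundProj_apply, ← BockDeriv.bockDeriv_homotopy_add_homotopy_bockDeriv h2,
      hp, map_zero, add_zero]
  · rintro s t ⟨q, hq⟩
    have h0 := BockDeriv.coeff_bockDeriv_eq_zero h2 (m := 0) (by simp) q
    have h1 := BockDeriv.coeff_bockDeriv_eq_zero h2 (m := Finsupp.single 0 1)
      (fun j => by rw [Finsupp.single_apply]; split_ifs <;> omega) q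
    rw [hq] at h0 h1
    simpa [(Finsupp.single_ne_zero.2 one_ne_zero).symm] using And.intro h0 h1
end

section
/- Let n ≥ 2, k ≥ 0, a ≥ 1, j ≥ 0 and b ≥ 0 be integers, and let 2 ≤ m_1 ≤ m_2 ≤ ... ≤ m_a be integers with b ≤ 2^{m_1} − 2. Suppose that both equations hold: (i) 2^n − 1 + 2^{n+1}·k = 2^{m_1+1}·j + Σ_{i=1}^{a}(2^{m_i} − 1), and (ii) 1 + 2^{n+1}·k = b + a + 2^{m_1+1}·j. Then b = 0. -/
/-- Degree argument: if the bidegree (Milnor-Witt degree, Chow degree) of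
`P^{2^{n-1}k}·v_n` agrees with that of `ρ^b·P^{2^{m_1-1}j}·v_{m_1}···v_{m_a}`
(with `2 ≤ m_1 ≤ ... ≤ m_a` and `b ≤ 2^{m_1} − 2`), then `b = 0`. -/
theorem stmt7 (n k a j b : ℕ) (hn : 2 ≤ n) (ha : 1 ≤ a)
    (m : Fin a → ℕ) (hm2 : ∀ i, 2 ≤ m i) (hmono : Monotone m)
    (hb : b ≤ 2 ^ (m ⟨0, ha⟩) - 2)
    (hmw : 2 ^ n - 1 + 2 ^ (n + 1) * k
        = 2 ^ (m ⟨0, ha⟩ + 1) * j + ∑ i, (2 ^ (m i) - 1))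
    (hc : 1 + 2 ^ (n + 1) * k = b + a + 2 ^ (m ⟨0, ha⟩ + 1) * j) :
    b = 0 := by
  set M := m ⟨0, ha⟩ with hMdef
  have hM2 : 2 ≤ M := hm2 _
  have hMle : ∀ i, M ≤ m i := fun i =>
    hmono (show (⟨0, ha⟩ : Fin a) ≤ i from Fin.le_def.mpr (Nat.zero_le _))
  set S := ∑ i : Fin a, 2 ^ m i with hSdef
  have hS : (∑ i : Fin a, (2 ^ m i - 1)) + (∑ _i : Fin a, 1) = S := by
    rw [← Finset.sum_add_distrib]
    exact Finset.sum_congr rfl fun i _ => Nat.sub_add_cancel Nat.one_le_two_pow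
  have hSa : (∑ _i : Fin a, (1 : ℕ)) = a := by simp
  rw [hSa] at hS
  have h2n : 4 ≤ 2 ^ n := by
    calc (4 : ℕ) = 2 ^ 2 := by norm_num
    _ ≤ 2 ^ n := Nat.pow_le_pow_right (by norm_num) hn
  have hPM : 4 ≤ 2 ^ M := by
    calc (4 : ℕ) = 2 ^ 2 := by norm_num
    _ ≤ 2 ^ M := Nat.pow_le_pow_right (by norm_num) hM2
  have E1 : 2 ^ n + 2 ^ (n + 1) * k + a = 2 ^ (M + 1) * j + S + 1 := by omega
  rcases le_or_gt M n with hMn | hMn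
  · -- case M ≤ n : work mod P := 2^M
    obtain ⟨c1, hc1⟩ : (2 : ℕ) ^ M ∣ 2 ^ n := pow_dvd_pow 2 hMn
    obtain ⟨c2, hc2⟩ : (2 : ℕ) ^ M ∣ 2 ^ (n + 1) * k :=
      Dvd.dvd.mul_right (pow_dvd_pow 2 (by omega)) k
    obtain ⟨c3, hc3⟩ : (2 : ℕ) ^ M ∣ 2 ^ (M + 1) * j :=
      Dvd.dvd.mul_right (pow_dvd_pow 2 (by omega)) j
    obtain ⟨c4, hc4⟩ : (2 : ℕ) ^ M ∣ S :=
      Finset.dvd_sum fun i _ => pow_dvd_pow 2 (hMle i)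
    rw [hc1, hc2, hc3, hc4] at E1
    rw [hc2, hc3] at hc
    have h1 : a % 2 ^ M = 1 % 2 ^ M := by
      have e : a + 2 ^ M * (c1 + c2) = 1 + 2 ^ M * (c3 + c4) := by
        rw [mul_add, mul_add]; linarith
      calc a % 2 ^ M = (a + 2 ^ M * (c1 + c2)) % 2 ^ M :=
            (Nat.add_mul_mod_self_left a _ _).symm
        _ = (1 + 2 ^ M * (c3 + c4)) % 2 ^ M := by rw [e]
        _ = 1 % 2 ^ M := Nat.add_mul_mod_self_left 1 _ _
    have h2 : (b + a) % 2 ^ M = 1 % 2 ^ M := by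
      calc (b + a) % 2 ^ M = (b + a + 2 ^ M * c3) % 2 ^ M :=
            (Nat.add_mul_mod_self_left _ _ _).symm
        _ = (1 + 2 ^ M * c2) % 2 ^ M := by rw [← hc]
        _ = 1 % 2 ^ M := Nat.add_mul_mod_self_left 1 _ _
    have h3 : b + a ≡ 0 + a [MOD 2 ^ M] := by
      rw [Nat.zero_add]; exact h2.trans h1.symm
    have h4 : b % 2 ^ M = 0 % 2 ^ M := Nat.ModEq.add_right_cancel' a h3
    have hblt : b < 2 ^ M := by omega
    rw [Nat.mod_eq_of_lt hblt, Nat.zero_mod] at h4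
    exact h4
  · -- case n < M : contradiction
    exfalso
    obtain ⟨c3, hc3⟩ : (2 : ℕ) ^ (n + 1) ∣ 2 ^ (M + 1) * j :=
      Dvd.dvd.mul_right (pow_dvd_pow 2 (by omega)) j
    obtain ⟨c4, hc4⟩ : (2 : ℕ) ^ (n + 1) ∣ S :=
      Finset.dvd_sum fun i _ => pow_dvd_pow 2 (by have := hMle i; omega)
    have hQ : (2 : ℕ) ^ (n + 1) = 2 * 2 ^ n := by ring
    have hmod : (a + 2 ^ n) % 2 ^ (n + 1) = 1 % 2 ^ (n + 1) := by
      have e : a + 2 ^ n + 2 ^ (n + 1) * k = 1 + 2 ^ (n + 1) * (c3 + c4) := by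
        rw [mul_add, ← hc3, ← hc4]; linarith
      calc (a + 2 ^ n) % 2 ^ (n + 1)
          = (a + 2 ^ n + 2 ^ (n + 1) * k) % 2 ^ (n + 1) :=
            (Nat.add_mul_mod_self_left _ _ _).symm
        _ = (1 + 2 ^ (n + 1) * (c3 + c4)) % 2 ^ (n + 1) := by rw [e]
        _ = 1 % 2 ^ (n + 1) := Nat.add_mul_mod_self_left 1 _ _
    rw [Nat.mod_eq_of_lt (by omega : (1:ℕ) < 2 ^ (n + 1))] at hmod
    -- a + 2^n ≥ 2^(n+1) + 1, hence a ≥ 2^n + 1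
    have hane : a + 2 ^ n ≠ 2 ^ (n + 1) := by
      intro h; rw [h, Nat.mod_self] at hmod; exact one_ne_zero hmod.symm
    have hage : 2 ^ (n + 1) ≤ a + 2 ^ n := by
      by_contra h
      push_neg at h
      rw [Nat.mod_eq_of_lt h] at hmod
      omega
    have hA : 2 ^ n + 1 ≤ a := by omega
    -- S ≥ a * 2^M
    have hSlb : a * 2 ^ M ≤ S := by
      calc a * 2 ^ M = ∑ _i : Fin a, 2 ^ M := by
            rw [Finset.sum_const, Finset.card_univ, Fintype.card_fin, smul_eq_mul]
        _ ≤ S := Finset.sum_le_sum fun i _ => Nat.pow_le_pow_right (by norm_num) (hMle i)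
    have hSeq : S + 2 = 2 ^ n + b + 2 * a := by omega
    have hxy : 2 * 2 ^ n ≤ 2 ^ M := by
      calc 2 * 2 ^ n = 2 ^ (n + 1) := by ring
      _ ≤ 2 ^ M := Nat.pow_le_pow_right (by norm_num) hMn
    have hY8 : 8 ≤ 2 ^ M := by omega
    have hp1 : (2 ^ n + 1) * 2 ^ M ≤ a * 2 ^ M := Nat.mul_le_mul_right _ hA
    have hp2 : a * 8 ≤ a * 2 ^ M := Nat.mul_le_mul_left _ hY8
    have hp3 : 4 * 2 ^ M ≤ 2 ^ n * 2 ^ M := Nat.mul_le_mul_right _ h2n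
    have hexp : (2 ^ n + 1) * 2 ^ M = 2 ^ n * 2 ^ M + 2 ^ M := by ring
    -- b + 2 ≤ 2^M
    have hb2 : b + 2 ≤ 2 ^ M := by omega
    linarith
end

section
/- Let n ≥ 2, k ≥ 0, a ≥ 2, j ≥ 0 and b ≥ 0 be integers, and let 2 ≤ m_1 ≤ m_2 ≤ ... ≤ m_a be integers with b ≤ 2^{m_1} − 2. Suppose that both equations hold: (i) 2·(2^n − 1) + 2^{n+1}·k = 2^{m_1+1}·j + Σ_{i=1}^{a}(2^{m_i} − 1), and (ii) 2 + 2^{n+1}·k = b + a + 2^{m_1+1}·j. Then b = 0. -/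
/-- Degree argument: if the bidegree (Milnor-Witt degree, Chow degree) of
`P^{2^{n-1}k}·v_n·v_n` agrees with that of `ρ^b·P^{2^{m_1-1}j}·v_{m_1}···v_{m_a}`
(with `a ≥ 2`, `2 ≤ m_1 ≤ ... ≤ m_a` and `b ≤ 2^{m_1} − 2`), then `b = 0`. -/
theorem stmt8 (n k a j b : ℕ) (hn : 2 ≤ n) (ha : 2 ≤ a)
    (m : Fin a → ℕ) (hm2 : ∀ i, 2 ≤ m i) (hmono : Monotone m)
    (hb : b ≤ 2 ^ (m ⟨0, by omega⟩) - 2)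
    (hmw : 2 * (2 ^ n - 1) + 2 ^ (n + 1) * k
        = 2 ^ (m ⟨0, by omega⟩ + 1) * j + ∑ i, (2 ^ (m i) - 1))
    (hc : 2 + 2 ^ (n + 1) * k = b + a + 2 ^ (m ⟨0, by omega⟩ + 1) * j) :
    b = 0 := by
  obtain ⟨M, hMdef⟩ : ∃ M, m ⟨0, by omega⟩ = M := ⟨_, rfl⟩
  rw [hMdef] at hb hmw hc
  have hMle : ∀ i, M ≤ m i := fun i => hMdef ▸ hmono (by simp [Fin.le_def])
  have hM2 : 2 ≤ M := hMdef ▸ hm2 _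
  obtain ⟨S, hSdef⟩ : ∃ S, ∑ i, 2 ^ (m i) = S := ⟨_, rfl⟩
  have hS : (∑ i, (2 ^ (m i) - 1)) + a = S := by
    rw [← hSdef]
    have h : (∑ i, (2 ^ (m i) - 1)) + a = ∑ i : Fin a, ((2 ^ (m i) - 1) + 1) := by
      rw [Finset.sum_add_distrib, Finset.sum_const, Finset.card_univ,
        Fintype.card_fin, smul_eq_mul, mul_one]
    rw [h]
    refine Finset.sum_congr rfl fun i _ => ?_
    have : 1 ≤ 2 ^ (m i) := Nat.one_le_two_pow
    omega
  have h2n : 2 * (2 ^ n - 1) + 2 = 2 ^ (n + 1) := by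
    have : 1 ≤ 2 ^ n := Nat.one_le_two_pow
    rw [pow_succ]; omega
  have h4 : (4 : ℕ) ≤ 2 ^ M := by
    calc (4:ℕ) = 2 ^ 2 := rfl
    _ ≤ 2 ^ M := Nat.pow_le_pow_right (by norm_num) hM2
  have hbX : b + 2 ≤ 2 ^ M := by omega
  -- key equation E3 : 2^(n+1) + 2a + b = S + 4
  have hE3 : 2 ^ (n + 1) + 2 * a + b = S + 4 := by
    have h1 := hmw
    have h2 := hc
    generalize 2 ^ (n + 1) * k = A at h1 h2
    generalize 2 ^ (M + 1) * j = B at h1 h2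
    omega
  by_cases hcase : M ≤ n + 1
  · -- divisibility case
    have hdvdS : (2 ^ M : ℤ) ∣ (S : ℤ) := by
      rw [← hSdef]
      push_cast
      exact Finset.dvd_sum fun i _ => pow_dvd_pow 2 (hMle i)
    have hdvdP : (2 ^ M : ℤ) ∣ (2 ^ (n + 1) : ℤ) := pow_dvd_pow 2 hcase
    have hdvdA : (2 ^ M : ℤ) ∣ (2 ^ (n + 1) * (k : ℤ)) := hdvdP.mul_right _
    have hdvdB : (2 ^ M : ℤ) ∣ (2 ^ (M + 1) * (j : ℤ)) :=
      (pow_dvd_pow 2 (Nat.le_succ M)).mul_right _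
    have h1 : (b : ℤ) + a - 2 = 2 ^ (n + 1) * k - 2 ^ (M + 1) * j := by
      have := hc; zify at this; linarith
    have h2 : 2 * (a : ℤ) + b - 4 = (S : ℤ) - 2 ^ (n + 1) := by
      have := hE3; zify at this; linarith
    have hbdvd : (2 ^ M : ℤ) ∣ (b : ℤ) := by
      have hbeq : (b : ℤ) = 2 * (2 ^ (n + 1) * k - 2 ^ (M + 1) * j)
          - ((S : ℤ) - 2 ^ (n + 1)) := by linarith
      rw [hbeq]
      exact dvd_sub ((dvd_sub hdvdA hdvdB).mul_left 2) (dvd_sub hdvdS hdvdP)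
    have hnd : (2 ^ M : ℕ) ∣ b := by exact_mod_cast hbdvd
    exact Nat.eq_zero_of_dvd_of_lt hnd (by omega)
  · -- size contradiction case
    exfalso
    have hSge : a * 2 ^ M ≤ S := by
      rw [← hSdef]
      calc a * 2 ^ M = ∑ _i : Fin a, 2 ^ M := by
            rw [Finset.sum_const, Finset.card_univ, Fintype.card_fin, smul_eq_mul]
      _ ≤ _ := Finset.sum_le_sum fun i _ =>
            Nat.pow_le_pow_right (by norm_num) (hMle i)
    have hP : 2 * 2 ^ (n + 1) ≤ 2 ^ M := by
      have hnM : n + 2 ≤ M := by omega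
      calc 2 * 2 ^ (n + 1) = 2 ^ (n + 2) := by ring
      _ ≤ 2 ^ M := Nat.pow_le_pow_right (by norm_num) hnM
    have ha' : (2 : ℤ) ≤ a := by exact_mod_cast ha
    have hSge' : (a : ℤ) * 2 ^ M ≤ S := by exact_mod_cast hSge
    have hP' : 2 * (2:ℤ) ^ (n + 1) ≤ 2 ^ M := by exact_mod_cast hP
    have hbX' : (b : ℤ) + 2 ≤ 2 ^ M := by exact_mod_cast hbX
    have hE3' : (2:ℤ) ^ (n + 1) + 2 * a + b = S + 4 := by exact_mod_cast hE3
    have hX2 : (2 : ℤ) ≤ 2 ^ M := by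
      have : (4:ℤ) ≤ 2 ^ M := by exact_mod_cast h4
      linarith
    nlinarith [mul_nonneg (sub_nonneg.2 ha') (sub_nonneg.2 hX2),
      (Nat.cast_nonneg b : (0:ℤ) ≤ b)]
end
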